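/- arXiv:2405.04905 — 3 statements merged into one kernel-verified Lean document; each statement's English description precedes it below -/
import Mathlib

section
/- Let G be a δ-hyperbolic group with word metric d_S. Let c₁ : [n₁,n₂] → G and c₂ : [m₁,m₂] → G be geodesics such that there is n with n₁ < n < n₂, n₂ − n > n, n > 8δ, c₁(n) = c₂(m₁), and d_S(c₁(n+i), c₂(m₁+i)) ≤ 2δ for every 0 ≤ i ≤ n. Then the concatenation c : [n₁, n + m₂ − m₁] → G defined by c(i) = c₁(i) for i ≤ n and c(i) = c₂(i − n + m₁) for i > n is an n'-local (1, 2δ)-quasi-geodesic for every n' ≤ n. -/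
/-- The word metric on a group `G` with respect to a generating set `S`. -/
noncomputable def wordDist {G : Type*} [Group G] (S : Set G) (g h : G) : ℕ :=
  sInf {n | ∃ l : List G, (∀ x ∈ l, x ∈ S) ∧ l.length = n ∧ g = h * l.prod}

/-- `S` is a finite symmetric generating set of `G`. -/
def IsFinSymmGenSet {G : Type*} [Group G] (S : Set G) : Prop :=
  S.Finite ∧ (∀ s ∈ S, s⁻¹ ∈ S) ∧ Subgroup.closure S = ⊤

/-- A discrete geodesic segment from `g` to `h` with respect to the integer-valued
metric `d`, parametrized on `[0, d g h]`. -/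
def IsGeodesicSeg {G : Type*} (d : G → G → ℕ) (c : ℕ → G) (g h : G) : Prop :=
  c 0 = g ∧ c (d g h) = h ∧
    ∀ i j : ℕ, i ≤ d g h → j ≤ d g h → d (c i) (c j) = Nat.dist i j

/-- A discrete geodesic ray: an isometric embedding `c : ℕ → G`. -/
def IsGeodesicRay {G : Type*} (d : G → G → ℕ) (c : ℕ → G) : Prop :=
  ∀ i j : ℕ, d (c i) (c j) = Nat.dist i j

/-- Two rays are asymptotic if their images are at finite Hausdorff distance. -/
def Asymptotic {G : Type*} (d : G → G → ℕ) (c c' : ℕ → G) : Prop :=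
  ∃ K : ℕ, (∀ t : ℕ, ∃ s : ℕ, d (c t) (c' s) ≤ K) ∧ (∀ s : ℕ, ∃ t : ℕ, d (c' s) (c t) ≤ K)

/-- Rips δ-hyperbolicity of the integer-valued metric `d`: each side of any discrete
geodesic triangle is contained in the δ-neighborhood of the union of the other two sides. -/
def DiscHyperbolic {G : Type*} (d : G → G → ℕ) (δ : ℕ) : Prop :=
  ∀ x y z : G, ∀ cxy cyz czx : ℕ → G,
    IsGeodesicSeg d cxy x y → IsGeodesicSeg d cyz y z → IsGeodesicSeg d czx z x →
    ∀ i ≤ d x y, ∃ p ∈ cyz '' Set.Iic (d y z) ∪ czx '' Set.Iic (d z x), d (cxy i) p ≤ δ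

/-- A discrete geodesic on the integer interval `[a,b]`. -/
def IsGeodesicOnZ {G : Type*} (d : G → G → ℕ) (c : ℤ → G) (a b : ℤ) : Prop :=
  ∀ s ∈ Set.Icc a b, ∀ t ∈ Set.Icc a b, (d (c s) (c t) : ℤ) = |s - t|

/-- The concatenation of `c₁` (up to time `n`) with `c₂` (reparametrized from `m₁`). -/
def concatMap {G : Type*} (c₁ c₂ : ℤ → G) (n m₁ : ℤ) : ℤ → G :=
  fun i => if i ≤ n then c₁ i else c₂ (i - n + m₁)

lemma wordDist_set_nonempty {G : Type*} [Group G] {S : Set G} (hS : IsFinSymmGenSet S)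
    (g h : G) :
    {n | ∃ l : List G, (∀ x ∈ l, x ∈ S) ∧ l.length = n ∧ g = h * l.prod}.Nonempty := by
  have hmem : h⁻¹ * g ∈ (Subgroup.closure S).toSubmonoid := by rw [hS.2.2]; trivial
  rw [Subgroup.closure_toSubmonoid] at hmem
  obtain ⟨l, hl, hprod⟩ := Submonoid.exists_list_of_mem_closure hmem
  refine ⟨l.length, l, ?_, rfl, ?_⟩
  · intro x hx
    rcases hl x hx with h' | h'
    · exact h'
    · have := hS.2.1 _ (Set.mem_inv.mp h'); simpa using this
  · rw [hprod]; group

lemma wordDist_symm {G : Type*} [Group G] {S : Set G} (hS : IsFinSymmGenSet S)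
    (g h : G) : wordDist S g h = wordDist S h g := by
  have key : ∀ a b : G, wordDist S b a ≤ wordDist S a b := by
    intro a b
    obtain ⟨l, hl, hlen, hab⟩ := Nat.sInf_mem (wordDist_set_nonempty hS a b)
    apply Nat.sInf_le
    refine ⟨(l.map (·⁻¹)).reverse, ?_,
      by rw [List.length_reverse, List.length_map, hlen]; rfl, ?_⟩
    · intro x hx
      simp only [List.mem_reverse, List.mem_map] at hx
      obtain ⟨y, hy, rfl⟩ := hx
      exact hS.2.1 _ (hl y hy)
    · have : ((l.map (·⁻¹)).reverse).prod = l.prod⁻¹ := (List.prod_inv_reverse l).symm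
      rw [this, hab]; group
  exact le_antisymm (key h g) (key g h)

lemma wordDist_triangle {G : Type*} [Group G] {S : Set G} (hS : IsFinSymmGenSet S)
    (g k h : G) : wordDist S g h ≤ wordDist S g k + wordDist S k h := by
  obtain ⟨l₁, hl₁, hlen₁, hgk⟩ := Nat.sInf_mem (wordDist_set_nonempty hS g k)
  obtain ⟨l₂, hl₂, hlen₂, hkh⟩ := Nat.sInf_mem (wordDist_set_nonempty hS k h)
  apply Nat.sInf_le
  refine ⟨l₂ ++ l₁, ?_, by rw [List.length_append, hlen₂, hlen₁, Nat.add_comm]; rfl, ?_⟩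
  · intro x hx
    rcases List.mem_append.mp hx with h' | h'
    · exact hl₂ x h'
    · exact hl₁ x h'
  · rw [List.prod_append, ← mul_assoc, ← hkh, hgk]

lemma concat_key {G : Type*} [Group G] (S : Set G) (hS : IsFinSymmGenSet S) (δ : ℕ)
    (c₁ c₂ : ℤ → G) (n₁ n₂ m₁ m₂ n : ℤ)
    (h₁ : IsGeodesicOnZ (wordDist S) c₁ n₁ n₂)
    (h₂ : IsGeodesicOnZ (wordDist S) c₂ m₁ m₂)
    (hn₂ : n < n₂) (hlen : n < n₂ - n)
    (heq : c₁ n = c₂ m₁)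
    (hclose : ∀ i : ℤ, 0 ≤ i → i ≤ n → (wordDist S (c₁ (n + i)) (c₂ (m₁ + i)) : ℤ) ≤ 2 * δ)
    (s t : ℤ) (hs : s ∈ Set.Icc n₁ (n + m₂ - m₁)) (ht : t ∈ Set.Icc n₁ (n + m₂ - m₁))
    (hst : s ≤ t) (hd : t - s ≤ n) :
    (t - s) - 2 * (δ : ℤ) ≤ (wordDist S (concatMap c₁ c₂ n m₁ s) (concatMap c₁ c₂ n m₁ t) : ℤ) ∧
    (wordDist S (concatMap c₁ c₂ n m₁ s) (concatMap c₁ c₂ n m₁ t) : ℤ) ≤ t - s := by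
  obtain ⟨hs1, hs2⟩ := hs
  obtain ⟨ht1, ht2⟩ := ht
  have hδ0 : (0:ℤ) ≤ 2 * (δ:ℤ) := by positivity
  by_cases hts : t ≤ n
  · have hss : s ≤ n := hst.trans hts
    simp only [concatMap, if_pos hss, if_pos hts]
    have hgeo := h₁ s ⟨hs1, hss.trans hn₂.le⟩ t ⟨ht1, hts.trans hn₂.le⟩
    rw [hgeo, abs_of_nonpos (by omega)]
    omega
  · push_neg at hts
    by_cases hsn : s ≤ n
    · -- mixed case
      simp only [concatMap, if_pos hsn, if_neg (not_le.mpr hts)]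
      have hi0 : (0:ℤ) ≤ t - n := by omega
      have hin : t - n ≤ n := by omega
      have harg : t - n + m₁ = m₁ + (t - n) := by ring
      rw [harg]
      constructor
      · -- lower bound via reverse triangle inequality
        have htri := wordDist_triangle hS (c₁ s) (c₂ (m₁ + (t - n))) (c₁ (n + (t - n)))
        have hsym : wordDist S (c₂ (m₁ + (t - n))) (c₁ (n + (t - n)))
            = wordDist S (c₁ (n + (t - n))) (c₂ (m₁ + (t - n))) :=
          wordDist_symm hS _ _
        have hcl := hclose (t - n) hi0 hin
        have hgeo : (wordDist S (c₁ s) (c₁ (n + (t - n))) : ℤ) = |s - (n + (t - n))| :=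
          h₁ s ⟨hs1, hsn.trans hn₂.le⟩ (n + (t - n)) ⟨by omega, by omega⟩
        rw [abs_of_nonpos (by omega)] at hgeo
        have := (Nat.cast_le (α := ℤ)).mpr htri
        push_cast at this
        rw [hsym] at htri
        have htri' : (wordDist S (c₁ s) (c₁ (n + (t - n))) : ℤ)
            ≤ (wordDist S (c₁ s) (c₂ (m₁ + (t - n))) : ℤ)
              + (wordDist S (c₁ (n + (t - n))) (c₂ (m₁ + (t - n))) : ℤ) := by
          exact_mod_cast htri
        omega
      · -- upper bound via triangle through the gluing point
        have htri := wordDist_triangle hS (c₁ s) (c₁ n) (c₂ (m₁ + (t - n)))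
        rw [heq] at htri
        have hgeo1 : (wordDist S (c₁ s) (c₁ n) : ℤ) = |s - n| :=
          h₁ s ⟨hs1, hsn.trans hn₂.le⟩ n ⟨by omega, hn₂.le⟩
        rw [abs_of_nonpos (by omega)] at hgeo1
        have hgeo2 : (wordDist S (c₂ m₁) (c₂ (m₁ + (t - n))) : ℤ) = |m₁ - (m₁ + (t - n))| :=
          h₂ m₁ ⟨le_refl _, by omega⟩ (m₁ + (t - n)) ⟨by omega, by omega⟩
        rw [abs_of_nonpos (by omega)] at hgeo2
        have htri' : (wordDist S (c₁ s) (c₂ (m₁ + (t - n))) : ℤ)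
            ≤ (wordDist S (c₁ s) (c₂ m₁) : ℤ) + (wordDist S (c₂ m₁) (c₂ (m₁ + (t - n))) : ℤ) := by
          exact_mod_cast htri
        have hre : wordDist S (c₁ s) (c₂ m₁) = wordDist S (c₁ s) (c₁ n) := by rw [heq]
        rw [hre] at htri'
        omega
    · -- both on c₂
      push_neg at hsn
      simp only [concatMap, if_neg (not_le.mpr hsn), if_neg (not_le.mpr hts)]
      have hgeo : (wordDist S (c₂ (s - n + m₁)) (c₂ (t - n + m₁)) : ℤ)
          = |(s - n + m₁) - (t - n + m₁)| :=
        h₂ (s - n + m₁) ⟨by omega, by omega⟩ (t - n + m₁) ⟨by omega, by omega⟩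
      rw [hgeo, abs_of_nonpos (by omega)]
      omega

/-- gluing two geodesic segments which `2δ`-fellow travel for time `n`
yields an `n'`-local `(1,2δ)`-quasi-geodesic, for every `n' ≤ n`. -/
theorem concat_is_local_quasigeodesic {G : Type*} [Group G] (S : Set G)
    (hS : IsFinSymmGenSet S) (δ : ℕ) (hhyp : DiscHyperbolic (wordDist S) δ)
    (c₁ c₂ : ℤ → G) (n₁ n₂ m₁ m₂ n : ℤ)
    (h₁ : IsGeodesicOnZ (wordDist S) c₁ n₁ n₂)
    (h₂ : IsGeodesicOnZ (wordDist S) c₂ m₁ m₂)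
    (hn₁ : n₁ < n) (hn₂ : n < n₂) (hlen : n < n₂ - n) (hδn : 8 * (δ : ℤ) < n)
    (heq : c₁ n = c₂ m₁)
    (hclose : ∀ i : ℤ, 0 ≤ i → i ≤ n → (wordDist S (c₁ (n + i)) (c₂ (m₁ + i)) : ℤ) ≤ 2 * δ) :
    ∀ n' ≤ n, ∀ s ∈ Set.Icc n₁ (n + m₂ - m₁), ∀ t ∈ Set.Icc n₁ (n + m₂ - m₁),
      |s - t| ≤ n' →
      (|s - t| - 2 * (δ : ℤ) ≤ (wordDist S (concatMap c₁ c₂ n m₁ s) (concatMap c₁ c₂ n m₁ t) : ℤ) ∧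
       (wordDist S (concatMap c₁ c₂ n m₁ s) (concatMap c₁ c₂ n m₁ t) : ℤ) ≤ |s - t|) := by
  intro n' hn' s hs t ht habs
  rcases le_total s t with hst | hts
  · have h := concat_key S hS δ c₁ c₂ n₁ n₂ m₁ m₂ n h₁ h₂ hn₂ hlen heq hclose s t hs ht hst
      (by rw [abs_of_nonpos (by omega)] at habs; omega)
    rw [abs_of_nonpos (by omega)]
    constructor <;> omega
  · have h := concat_key S hS δ c₁ c₂ n₁ n₂ m₁ m₂ n h₁ h₂ hn₂ hlen heq hclose t s ht hs hts
      (by rw [abs_of_nonneg (by omega)] at habs; omega)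
    rw [wordDist_symm hS] at h
    rw [abs_of_nonneg (by omega)]
    constructor <;> omega
end

section
/- Let G be a δ-hyperbolic group with Gromov boundary ∂G and let Q : 𝒟 → ∂G be the canonical surjection from the space of DSGs. For every finite open cover (U_i)_{i=1}^n of ∂G there exists l ∈ ℕ such that for all m, m' ∈ 𝒟, if d_S(c_m^{1}(i), c_{m'}^{1}(i)) ≤ 2δ for every i ≤ l, then there is i ≤ n with Q(m), Q(m') ∈ U_i. -/
/-- The ray determined by a map `m : G → G` starting at `g`:
each step multiplies by the value of `m` at the current position. -/
def dsgRay {G : Type*} [Group G] (m : G → G) (g : G) : ℕ → G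
  | 0 => g
  | n + 1 => dsgRay m g n * m (dsgRay m g n)

/-- A directed system of geodesics (DSG): a map `m : G → S` all of whose rays are
geodesic rays, any two of which are asymptotic. -/
def IsDSG {G : Type*} [Group G] (d : G → G → ℕ) (S : Set G) (m : G → G) : Prop :=
  (∀ g : G, m g ∈ S) ∧ (∀ g : G, IsGeodesicRay d (dsgRay m g)) ∧
    ∀ g h : G, Asymptotic d (dsgRay m g) (dsgRay m h)

/-- The space of DSGs on `G`. -/
def DSGs {G : Type*} [Group G] (d : G → G → ℕ) (S : Set G) := {m : G → G // IsDSG d S m}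

/-- The space of geodesic rays in `G`. -/
def GeodesicRays {G : Type*} (d : G → G → ℕ) := {c : ℕ → G // IsGeodesicRay d c}

/-- The Gromov boundary of `G`, as the quotient of the space of geodesic rays by the
relation of being asymptotic (finite Hausdorff distance). -/
def GromovBoundary {G : Type*} (d : G → G → ℕ) :=
  Quot (fun c c' : GeodesicRays d => Asymptotic d c.1 c'.1)

/-- The topology on geodesic rays: uniform convergence on bounded sets, which for the
discrete group `G` is the product (pointwise convergence) topology. -/
def raysTop {G : Type*} (d : G → G → ℕ) : TopologicalSpace (GeodesicRays d) :=
  TopologicalSpace.induced (fun c => (c.1 : ℕ → G))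
    (@Pi.topologicalSpace ℕ (fun _ => G) (fun _ => ⊥))

/-- The quotient topology on the Gromov boundary. -/
def boundaryTop {G : Type*} (d : G → G → ℕ) : TopologicalSpace (GromovBoundary d) :=
  (raysTop d).coinduced (Quot.mk _)

/-- The canonical surjection `Q : 𝒟 → ∂G` sending a DSG to the class of its ray at `1`. -/
def Qmap {G : Type*} [Group G] (d : G → G → ℕ) (S : Set G) (m : DSGs d S) :
    GromovBoundary d :=
  Quot.mk _ ⟨dsgRay m.1 1, m.2.2.1 1⟩

/-- The topology `τ` on the space of DSGs, generated by the neighborhoods `𝒩_m^{l,D}`. -/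
def dsgTop {G : Type*} [Group G] (d : G → G → ℕ) (S : Set G) (δ : ℕ) :
    TopologicalSpace (DSGs d S) :=
  TopologicalSpace.generateFrom
    {U | ∃ (m : DSGs d S) (l D : ℕ), 8 * δ < l ∧ 2 * δ ≤ D ∧
      U = {m' : DSGs d S | ∀ i ≤ l, d (dsgRay m.1 1 i) (dsgRay m'.1 1 i) ≤ D}}

/-- The word metric is left-invariant. -/
theorem wordDist_mul_left {G : Type*} [Group G] (S : Set G) (a g h : G) :
    wordDist S (a * g) (a * h) = wordDist S g h := by
  unfold wordDist
  congr 1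
  ext n
  constructor
  · rintro ⟨l, h1, h2, h3⟩
    exact ⟨l, h1, h2, by rw [mul_assoc] at h3; exact mul_left_cancel h3⟩
  · rintro ⟨l, h1, h2, h3⟩
    exact ⟨l, h1, h2, by rw [mul_assoc, ← h3]⟩

/-- The canonical action of `G` on its Gromov boundary, induced by left translation
of geodesic rays. -/
def boundaryAct {G : Type*} [Group G] (S : Set G) (g : G) :
    GromovBoundary (wordDist S) → GromovBoundary (wordDist S) :=
  Quot.map
    (fun c => ⟨fun t => g * c.1 t, fun i j => by
      rw [wordDist_mul_left]; exact c.2 i j⟩)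
    (by
      rintro c c' ⟨K, h1, h2⟩
      refine ⟨K, fun t => ?_, fun s => ?_⟩
      · obtain ⟨s, hs⟩ := h1 t
        exact ⟨s, by simpa [wordDist_mul_left] using hs⟩
      · obtain ⟨t, ht⟩ := h2 s
        exact ⟨t, by simpa [wordDist_mul_left] using ht⟩)

/-!
Geodesic rays from `1` form a compact set for the topology of pointwise convergence: the
`i`-th point of such a ray lies in the finite set `S ^ i`, so Tychonoff applies. Two rays that
stay `2δ`-close at all times are asymptotic, hence define the same boundary point. Therefore the
closed sets of pairs of rays from `1` that are `2δ`-close up to time `l` decrease, as `l → ∞`,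
into the open set of pairs lying in a common `Q⁻¹ U_i`, and by compactness one `l` suffices.
-/

open Set Topology Pointwise

theorem IsCompact.exists_inter_subset_of_antitone {X : Type*} [TopologicalSpace X]
    {K : Set X} (hK : IsCompact K) {E : ℕ → Set X} (hE : ∀ l, IsClosed (E l))
    (hanti : Antitone E) {W : Set X} (hW : IsOpen W) (hKEW : K ∩ ⋂ l, E l ⊆ W) :
    ∃ l, K ∩ E l ⊆ W := by
  obtain ⟨l, hl⟩ := hK.elim_directed_family_closed (fun l => E l \ W)
    (fun l => (hE l).sdiff hW)
    (eq_empty_of_forall_notMem fun x ⟨hxK, hx⟩ => (mem_iInter.1 hx 0).2 <|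
      hKEW ⟨hxK, mem_iInter.2 fun l => (mem_iInter.1 hx l).1⟩)
    (fun a b => ⟨max a b, sdiff_subset_sdiff_left (hanti (le_max_left a b)),
      sdiff_subset_sdiff_left (hanti (le_max_right a b))⟩)
  exact ⟨l, fun x ⟨hxK, hxl⟩ => by_contra fun hxW => hl.subset ⟨hxK, hxl, hxW⟩⟩

/-- A Lebesgue number lemma, with the uniformity replaced by a decreasing sequence of closed
relations. -/
theorem IsCompact.exists_forall_mem_cover_of_antitone {X Y ι : Type*} [TopologicalSpace X]
    [TopologicalSpace Y] {K : Set X} (hK : IsCompact K) {f : X → Y} (hf : Continuous f)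
    {U : ι → Set Y} (hU : ∀ i, IsOpen (U i)) (hcover : ⋃ i, U i = univ)
    {E : ℕ → Set (X × X)} (hE : ∀ l, IsClosed (E l)) (hanti : Antitone E)
    (hfE : ∀ x ∈ K, ∀ y ∈ K, (∀ l, (x, y) ∈ E l) → f x = f y) :
    ∃ l, ∀ x ∈ K, ∀ y ∈ K, (x, y) ∈ E l → ∃ i, f x ∈ U i ∧ f y ∈ U i := by
  have hW : IsOpen (⋃ i, (f ⁻¹' U i) ×ˢ (f ⁻¹' U i)) :=
    isOpen_iUnion fun i => ((hU i).preimage hf).prod ((hU i).preimage hf)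
  obtain ⟨l, hl⟩ := (hK.prod hK).exists_inter_subset_of_antitone hE hanti hW <| by
    rintro ⟨x, y⟩ ⟨⟨hx, hy⟩, hxy⟩
    obtain ⟨i, hi⟩ := mem_iUnion.1 (hcover ▸ mem_univ (f x))
    refine mem_iUnion.2 ⟨i, hi, ?_⟩
    rw [mem_preimage, ← hfE x hx y hy (mem_iInter.1 hxy)]
    exact hi
  exact ⟨l, fun x hx y hy hxy => mem_iUnion.1 (hl ⟨⟨hx, hy⟩, hxy⟩)⟩

theorem Set.Finite.pow {M : Type*} [Monoid M] {s : Set M} (hs : s.Finite) :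
    ∀ n : ℕ, (s ^ n).Finite
  | 0 => by simp
  | n + 1 => by rw [pow_succ]; exact (hs.pow n).mul hs

section WordMetric

variable {G : Type*} [Group G] {S : Set G}

theorem wordDist_comm (hS : ∀ s ∈ S, s⁻¹ ∈ S) (g h : G) :
    wordDist S g h = wordDist S h g := by
  have key : ∀ g h : G,
      {n | ∃ l : List G, (∀ x ∈ l, x ∈ S) ∧ l.length = n ∧ g = h * l.prod} ⊆
      {n | ∃ l : List G, (∀ x ∈ l, x ∈ S) ∧ l.length = n ∧ h = g * l.prod} := by
    rintro g h n ⟨l, hl, hlen, hprod⟩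
    refine ⟨(l.map (·⁻¹)).reverse, ?_, by simp [hlen], ?_⟩
    · simp only [List.mem_reverse, List.mem_map]
      rintro _ ⟨y, hy, rfl⟩
      exact hS y (hl y hy)
    · rw [← List.prod_inv_reverse, hprod]
      group
  exact congrArg sInf ((key g h).antisymm (key h g))

theorem exists_mem_eq_mul_of_wordDist_eq_one {g h : G} (hgh : wordDist S g h = 1) :
    ∃ s ∈ S, g = h * s := by
  have hmem := Nat.sInf_mem (Nat.nonempty_of_pos_sInf (hgh ▸ one_pos : 0 < wordDist S g h))
  rw [← wordDist, hgh] at hmem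
  obtain ⟨l, hl, hlen, hprod⟩ := hmem
  obtain ⟨s, rfl⟩ := List.length_eq_one_iff.1 hlen
  exact ⟨s, hl s (List.mem_singleton_self s), by simpa using hprod⟩

theorem IsGeodesicRay.mem_pow {c : ℕ → G} (hc : IsGeodesicRay (wordDist S) c) (h0 : c 0 = 1) :
    ∀ i, c i ∈ S ^ i
  | 0 => by simp [h0]
  | i + 1 => by
    obtain ⟨s, hs, hcs⟩ := exists_mem_eq_mul_of_wordDist_eq_one <|
      (hc (i + 1) i).trans (by simp [Nat.dist_eq_sub_of_le_right])
    rw [hcs, pow_succ]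
    exact mul_mem_mul (hc.mem_pow h0 i) hs

end WordMetric

theorem asymptotic_of_forall_le {G : Type*} {d : G → G → ℕ} (hd : ∀ x y, d x y = d y x)
    {c c' : ℕ → G} {D : ℕ} (h : ∀ t, d (c t) (c' t) ≤ D) : Asymptotic d c c' :=
  ⟨D, fun t => ⟨t, h t⟩, fun t => ⟨t, (hd _ _).trans_le (h t)⟩⟩

theorem isClosed_setOf_isGeodesicRay {G : Type*} [TopologicalSpace G] [DiscreteTopology G]
    (d : G → G → ℕ) : IsClosed {c : ℕ → G | IsGeodesicRay d c} := by
  simp only [IsGeodesicRay, ofPred_forall]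
  exact isClosed_iInter fun i => isClosed_iInter fun j =>
    (isClosed_discrete {p : G × G | d p.1 p.2 = Nat.dist i j}).preimage
      (f := fun c : ℕ → G => (c i, c j)) (by fun_prop)

theorem isCompact_setOf_isGeodesicRay {G : Type*} [Group G] [TopologicalSpace G]
    [DiscreteTopology G] {S : Set G} (hS : S.Finite) :
    IsCompact {c : ℕ → G | IsGeodesicRay (wordDist S) c ∧ c 0 = 1} :=
  (isCompact_univ_pi fun i => (hS.pow i).isCompact).of_isClosed_subset
    ((isClosed_setOf_isGeodesicRay _).inter ((isClosed_discrete {1}).preimage (continuous_apply 0)))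
    fun _ hc i _ => hc.1.mem_pow hc.2 i

def fellowTravelUpTo {G : Type*} (d : G → G → ℕ) (D l : ℕ) :
    Set (GeodesicRays d × GeodesicRays d) :=
  {p | ∀ i ≤ l, d (p.1.1 i) (p.2.1 i) ≤ D}

theorem antitone_fellowTravelUpTo {G : Type*} (d : G → G → ℕ) (D : ℕ) :
    Antitone (fellowTravelUpTo d D) :=
  fun _ _ hkl _ hp i hi => hp i (hi.trans hkl)

section RayTopology

attribute [local instance] raysTop

variable {G : Type*}

theorem isClosed_fellowTravelUpTo (d : G → G → ℕ) (D l : ℕ) :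
    IsClosed (fellowTravelUpTo d D l) := by
  let : TopologicalSpace G := ⊥
  have : DiscreteTopology G := ⟨rfl⟩
  have hval (i : ℕ) : Continuous fun c : GeodesicRays d => c.1 i :=
    (continuous_apply i).comp continuous_induced_dom
  simp only [fellowTravelUpTo, ofPred_forall]
  exact isClosed_iInter fun i => isClosed_iInter fun _ =>
    (isClosed_discrete {q : G × G | d q.1 q.2 ≤ D}).preimage
      (((hval i).comp continuous_fst).prodMk ((hval i).comp continuous_snd))

theorem isCompact_setOf_geodesicRays_zero_eq_one [Group G] {S : Set G} (hS : S.Finite) :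
    IsCompact {c : GeodesicRays (wordDist S) | c.1 0 = 1} := by
  let : TopologicalSpace G := ⊥
  have : DiscreteTopology G := ⟨rfl⟩
  rw [(⟨rfl⟩ : IsInducing fun c : GeodesicRays (wordDist S) => c.1).isCompact_iff]
  exact (Subtype.image_preimage_coe _ {c : ℕ → G | c 0 = 1}).symm ▸
    isCompact_setOf_isGeodesicRay hS

end RayTopology

theorem boundary_Lebesgue_general {G : Type*} [Group G] (S : Set G)
    (hS : IsFinSymmGenSet S) (δ : ℕ)
    (n : ℕ) (U : Fin n → Set (GromovBoundary (wordDist S)))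
    (hopen : ∀ i, @IsOpen _ (boundaryTop (wordDist S)) (U i))
    (hcover : (⋃ i, U i) = Set.univ) :
    ∃ l : ℕ, ∀ m m' : DSGs (wordDist S) S,
      (∀ i ≤ l, wordDist S (dsgRay m.1 1 i) (dsgRay m'.1 1 i) ≤ 2 * δ) →
      ∃ i : Fin n, Qmap (wordDist S) S m ∈ U i ∧ Qmap (wordDist S) S m' ∈ U i := by
  let := raysTop (wordDist S)
  let := boundaryTop (wordDist S)
  obtain ⟨l, hl⟩ :=
    (isCompact_setOf_geodesicRays_zero_eq_one hS.1).exists_forall_mem_cover_of_antitone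
      continuous_coinduced_rng hopen hcover (isClosed_fellowTravelUpTo _ (2 * δ))
      (antitone_fellowTravelUpTo _ _) fun c _ c' _ hcc' =>
        Quot.sound <| asymptotic_of_forall_le (wordDist_comm hS.2.1) fun t => hcc' t t le_rfl
  exact ⟨l, fun m m' => hl ⟨_, m.2.2.1 1⟩ rfl ⟨_, m'.2.2.1 1⟩ rfl⟩

/-- Lebesgue number lemma for `∂G`: for every finite open cover of the
boundary there is `l` such that DSGs whose base rays `2δ`-fellow travel up to time `l`
are mapped by `Q` into a common element of the cover. -/
theorem boundary_Lebesgue {G : Type*} [Group G] (S : Set G)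
    (hS : IsFinSymmGenSet S) (δ : ℕ) (hhyp : DiscHyperbolic (wordDist S) δ)
    (n : ℕ) (U : Fin n → Set (GromovBoundary (wordDist S)))
    (hopen : ∀ i, @IsOpen _ (boundaryTop (wordDist S)) (U i))
    (hcover : (⋃ i, U i) = Set.univ) :
    ∃ l : ℕ, ∀ m m' : DSGs (wordDist S) S,
      (∀ i ≤ l, wordDist S (dsgRay m.1 1 i) (dsgRay m'.1 1 i) ≤ 2 * δ) →
      ∃ i : Fin n, Qmap (wordDist S) S m ∈ U i ∧ Qmap (wordDist S) S m' ∈ U i :=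
  boundary_Lebesgue_general S hS δ n U hopen hcover
end

section
/- Let G be a δ-hyperbolic group with word metric d_S, let (V_j) be an open cover such that x' ∈ 𝒩_x^L whenever x, x' lie in a common V_j, let F = {g : d_S(g,1) ≤ L}, and let (x_g)_{g∈G} be an (F,(V_j))-pseudo-orbit in ∂G with chosen DSGs m_g ∈ Q^{-1}(x_g). Then for every g, h ∈ G with d_S(g,h) ≤ L and every t ≤ L, d_S(h·c_{m_{h^{-1}}}^{1}(t), g·c_{m_{g^{-1}}}^{1}(t)) ≤ d_S(h,g) + 6δ. -/
section AuxLemmas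
variable {G : Type*} [Group G] {S : Set G}


lemma exists_word (hsymm : ∀ s ∈ S, s⁻¹ ∈ S) (hgen : Subgroup.closure S = ⊤) (x : G) :
    ∃ l : List G, (∀ s ∈ l, s ∈ S) ∧ x = l.prod := by
  have hx : x ∈ Subgroup.closure S := by rw [hgen]; trivial
  induction hx using Subgroup.closure_induction with
  | mem s hs => exact ⟨[s], by simp [hs]⟩
  | one => exact ⟨[], by simp⟩
  | mul a b _ _ iha ihb =>
    obtain ⟨l1, h1, e1⟩ := iha
    obtain ⟨l2, h2, e2⟩ := ihb
    exact ⟨l1 ++ l2, by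
      constructor
      · intro s hs; rcases List.mem_append.1 hs with h | h
        exacts [h1 s h, h2 s h]
      · simp [e1, e2]⟩
  | inv a _ ih =>
    obtain ⟨l, h1, e⟩ := ih
    refine ⟨(l.map (·⁻¹)).reverse, ?_, ?_⟩
    · intro s hs
      simp only [List.mem_reverse, List.mem_map] at hs
      obtain ⟨y, hy, rfl⟩ := hs
      exact hsymm y (h1 y hy)
    · rw [e, List.prod_inv_reverse]

lemma wordDist_le (g h : G) (l : List G) (hl : ∀ x ∈ l, x ∈ S) (he : g = h * l.prod) :
    wordDist S g h ≤ l.length :=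
  Nat.sInf_le ⟨l, hl, rfl, he⟩

lemma wordDist_self (g : G) : wordDist S g g = 0 :=
  Nat.le_zero.1 (by simpa using wordDist_le g g [] (by simp) (by simp))

lemma wordDist_min (hsymm : ∀ s ∈ S, s⁻¹ ∈ S) (hgen : Subgroup.closure S = ⊤) (g h : G) :
    ∃ l : List G, (∀ x ∈ l, x ∈ S) ∧ l.length = wordDist S g h ∧ g = h * l.prod := by
  have hne : {n | ∃ l : List G, (∀ x ∈ l, x ∈ S) ∧ l.length = n ∧ g = h * l.prod}.Nonempty := by
    obtain ⟨l, hl, he⟩ := exists_word hsymm hgen (h⁻¹ * g)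
    exact ⟨l.length, l, hl, rfl, by rw [← he]; group⟩
  exact Nat.sInf_mem hne

lemma wordDist_symm_le (hsymm : ∀ s ∈ S, s⁻¹ ∈ S) (hgen : Subgroup.closure S = ⊤) (g h : G) :
    wordDist S h g ≤ wordDist S g h := by
  obtain ⟨l, hl, hlen, he⟩ := wordDist_min hsymm hgen g h
  have : h = g * ((l.map (·⁻¹)).reverse).prod := by
    rw [← List.prod_inv_reverse, he]; group
  calc wordDist S h g ≤ ((l.map (·⁻¹)).reverse).length := by
        apply wordDist_le _ _ _ _ this
        intro s hs
        simp only [List.mem_reverse, List.mem_map] at hs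
        obtain ⟨y, hy, rfl⟩ := hs
        exact hsymm y (hl y hy)
    _ = wordDist S g h := by simpa using hlen

lemma wordDist_symm_s15 (hsymm : ∀ s ∈ S, s⁻¹ ∈ S) (hgen : Subgroup.closure S = ⊤) (g h : G) :
    wordDist S g h = wordDist S h g :=
  le_antisymm (wordDist_symm_le hsymm hgen h g) (wordDist_symm_le hsymm hgen g h)

lemma wordDist_triangle_s15 (hsymm : ∀ s ∈ S, s⁻¹ ∈ S) (hgen : Subgroup.closure S = ⊤) (g h k : G) :
    wordDist S g k ≤ wordDist S g h + wordDist S h k := by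
  obtain ⟨l1, hl1, hlen1, he1⟩ := wordDist_min hsymm hgen g h
  obtain ⟨l2, hl2, hlen2, he2⟩ := wordDist_min hsymm hgen h k
  calc wordDist S g k ≤ (l2 ++ l1).length := by
        apply wordDist_le _ _ _ _ ?_
        · intro s hs; rcases List.mem_append.1 hs with hh | hh
          exacts [hl2 s hh, hl1 s hh]
        · rw [List.prod_append, ← mul_assoc, ← he2, ← he1]
    _ = wordDist S g h + wordDist S h k := by rw [List.length_append]; omega

lemma exists_geodesicSeg (hsymm : ∀ s ∈ S, s⁻¹ ∈ S) (hgen : Subgroup.closure S = ⊤) (g h : G) :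
    ∃ c : ℕ → G, IsGeodesicSeg (wordDist S) c g h := by
  obtain ⟨l0, hl0, hlen0, he0⟩ := wordDist_min hsymm hgen g h
  set n := wordDist S g h with hn
  set l : List G := (l0.map (·⁻¹)).reverse with hldef
  have hl : ∀ x ∈ l, x ∈ S := by
    intro s hs
    simp only [hldef, List.mem_reverse, List.mem_map] at hs
    obtain ⟨y, hy, rfl⟩ := hs
    exact hsymm y (hl0 y hy)
  have hlen : l.length = n := by simp [hldef, hlen0]
  have he : h = g * l.prod := by
    rw [hldef, ← List.prod_inv_reverse, he0]; group
  refine ⟨fun i => g * (l.take i).prod, ?_, ?_, ?_⟩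
  · simp
  · show g * (l.take (wordDist S g h)).prod = h
    rw [← hn, ← hlen, List.take_length, ← he]
  · rw [← hn]
    -- first: for i ≤ j, c j = c i * ((l.take j).drop i).prod
    have key : ∀ i j : ℕ, i ≤ j → j ≤ n →
        wordDist S (g * (l.take i).prod) (g * (l.take j).prod) = j - i := by
      intro i j hij hjn
      have hsplit : l.take j = l.take i ++ (l.take j).drop i := by
        conv_lhs => rw [← List.take_append_drop i (l.take j)]
        rw [List.take_take, min_eq_left hij]
      have hcj : g * (l.take j).prod = (g * (l.take i).prod) * ((l.take j).drop i).prod := by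
        rw [mul_assoc, ← List.prod_append, ← hsplit]
      have hlen2 : ((l.take j).drop i).length = j - i := by
        simp [hlen, hjn]
      have hup : wordDist S (g * (l.take j).prod) (g * (l.take i).prod) ≤ j - i := by
        rw [← hlen2]
        apply wordDist_le _ _ _ _ hcj
        intro s hs
        exact hl s (List.mem_of_mem_take (List.mem_of_mem_drop hs))
      have hup' : wordDist S (g * (l.take i).prod) (g * (l.take j).prod) ≤ j - i :=
        le_trans (wordDist_symm_le hsymm hgen _ _) hup
      -- lower bound
      have h1 : wordDist S g (g * (l.take i).prod) ≤ i := by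
        refine le_trans (wordDist_symm_le hsymm hgen _ _) ?_
        calc wordDist S (g * (l.take i).prod) g ≤ (l.take i).length :=
              wordDist_le _ _ _ (fun s hs => hl s (List.mem_of_mem_take hs)) rfl
          _ ≤ i := by simp [List.length_take]
      have h2 : wordDist S (g * (l.take j).prod) h ≤ n - j := by
        have hcj2 : h = (g * (l.take j).prod) * (l.drop j).prod := by
          rw [mul_assoc, ← List.prod_append, List.take_append_drop, ← he]
        calc wordDist S (g * (l.take j).prod) h ≤ (l.drop j).length := by
              refine le_trans (wordDist_symm_le hsymm hgen _ _) ?_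
              exact wordDist_le _ _ _ (fun s hs => hl s (List.mem_of_mem_drop hs)) hcj2
          _ = n - j := by simp [hlen]
      have hlow : n ≤ i + wordDist S (g * (l.take i).prod) (g * (l.take j).prod) + (n - j) := by
        calc n = wordDist S g h := hn
          _ ≤ wordDist S g (g * (l.take i).prod) +
              wordDist S (g * (l.take i).prod) h := wordDist_triangle_s15 hsymm hgen _ _ _
          _ ≤ wordDist S g (g * (l.take i).prod) +
              (wordDist S (g * (l.take i).prod) (g * (l.take j).prod) +
               wordDist S (g * (l.take j).prod) h) := by
                have := wordDist_triangle_s15 hsymm hgen (g * (l.take i).prod)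
                  (g * (l.take j).prod) h
                omega
          _ ≤ i + wordDist S (g * (l.take i).prod) (g * (l.take j).prod) + (n - j) := by
                omega
      omega
    intro i j hi hj
    rcases le_total i j with hij | hij
    · rw [key i j hij hj, Nat.dist_eq_sub_of_le hij]
    · rw [wordDist_symm_s15 hsymm hgen, key j i hij hi, Nat.dist_comm, Nat.dist_eq_sub_of_le hij]

/-- Asymptotic geodesic rays `4δ`-fellow travel, up to the distance of basepoints. -/
lemma rays_fellow_travel (hsymm : ∀ s ∈ S, s⁻¹ ∈ S) (hgen : Subgroup.closure S = ⊤)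
    {δ : ℕ} (hhyp : DiscHyperbolic (wordDist S) δ) {c c' : ℕ → G}
    (hc : IsGeodesicRay (wordDist S) c) (hc' : IsGeodesicRay (wordDist S) c')
    (hasym : Asymptotic (wordDist S) c c') (t : ℕ) :
    wordDist S (c t) (c' t) ≤ wordDist S (c 0) (c' 0) + 4 * δ := by
  obtain ⟨K, hK1, _⟩ := hasym
  obtain ⟨s', hs'⟩ := hK1 (t + K + δ + 1)
  obtain ⟨η, hη⟩ := exists_geodesicSeg hsymm hgen (c (t + K + δ + 1)) (c' s')
  obtain ⟨ζ, hζ⟩ := exists_geodesicSeg hsymm hgen (c' s') (c 0)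
  obtain ⟨α, hα⟩ := exists_geodesicSeg hsymm hgen (c 0) (c' 0)
  have hcB : wordDist S (c 0) (c (t + K + δ + 1)) = t + K + δ + 1 := by
    rw [hc 0 (t + K + δ + 1)]; simp [Nat.dist]
  have hcseg : IsGeodesicSeg (wordDist S) c (c 0) (c (t + K + δ + 1)) :=
    ⟨rfl, by rw [hcB], fun i j _ _ => hc i j⟩
  have hc's : wordDist S (c' 0) (c' s') = s' := by rw [hc' 0 s']; simp [Nat.dist]
  have hc'seg : IsGeodesicSeg (wordDist S) c' (c' 0) (c' s') :=
    ⟨rfl, by rw [hc's], fun i j _ _ => hc' i j⟩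
  -- triangle 1: (c 0, c B, c' s')
  obtain ⟨p, hp, hpd⟩ := hhyp (c 0) (c (t + K + δ + 1)) (c' s') c η ζ hcseg hη hζ t
    (by rw [hcB]; omega)
  rcases hp with ⟨u, hu, rfl⟩ | ⟨u, hu, rfl⟩
  · -- p on η: contradiction, c t is too far from c B
    exfalso
    have h1 : wordDist S (c (t + K + δ + 1)) (η u) = u := by
      have h := hη.2.2 0 u (by simp) (Set.mem_Iic.1 hu)
      rw [hη.1] at h; rw [h]; simp [Nat.dist]
    have h3 : wordDist S (η u) (c (t + K + δ + 1)) = u := by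
      rw [wordDist_symm_s15 hsymm hgen, h1]
    have h2 := wordDist_triangle_s15 hsymm hgen (c t) (η u) (c (t + K + δ + 1))
    have h4 : wordDist S (c t) (c (t + K + δ + 1)) = K + δ + 1 := by
      rw [hc t (t + K + δ + 1), Nat.dist_eq_sub_of_le (by omega)]; omega
    have h5 : u ≤ K := le_trans (Set.mem_Iic.1 hu) hs'
    omega
  · -- p = ζ u : triangle 2: (c' s', c 0, c' 0) with sides ζ, α, c'
    obtain ⟨q, hq, hqd⟩ := hhyp (c' s') (c 0) (c' 0) ζ α c' hζ hα hc'seg u (Set.mem_Iic.1 hu)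
    have hct : wordDist S (c t) q ≤ 2 * δ := by
      have h := wordDist_triangle_s15 hsymm hgen (c t) (ζ u) q
      omega
    have h0t : wordDist S (c 0) (c t) = t := by rw [hc 0 t]; simp [Nat.dist]
    have h0t' : wordDist S (c' 0) (c' t) = t := by rw [hc' 0 t]; simp [Nat.dist]
    rcases hq with ⟨v, hv, rfl⟩ | ⟨v, hv, rfl⟩
    · -- q = α v on the geodesic from c 0 to c' 0
      have hv' : v ≤ wordDist S (c 0) (c' 0) := Set.mem_Iic.1 hv
      have h1 : wordDist S (c 0) (α v) = v := by
        have h := hα.2.2 0 v (by simp) hv'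
        rw [hα.1] at h; rw [h]; simp [Nat.dist]
      have h2 : wordDist S (α v) (c' 0) = wordDist S (c 0) (c' 0) - v := by
        have h := hα.2.2 v (wordDist S (c 0) (c' 0)) hv' le_rfl
        rw [hα.2.1] at h
        rw [h, Nat.dist_eq_sub_of_le hv']
      have hsym1 : wordDist S (α v) (c t) = wordDist S (c t) (α v) :=
        wordDist_symm_s15 hsymm hgen _ _
      have htri := wordDist_triangle_s15 hsymm hgen (c 0) (α v) (c t)
      have htri2 := wordDist_triangle_s15 hsymm hgen (c t) (α v) (c' 0)
      have htri3 := wordDist_triangle_s15 hsymm hgen (c t) (c' 0) (c' t)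
      omega
    · -- q = c' v
      have h1 : wordDist S (c' v) (c' t) = Nat.dist v t := hc' v t
      have h0v : wordDist S (c' 0) (c' v) = v := by rw [hc' 0 v]; simp [Nat.dist]
      have hsymm0 : wordDist S (c' 0) (c 0) = wordDist S (c 0) (c' 0) :=
        wordDist_symm_s15 hsymm hgen _ _
      have hsymq : wordDist S (c' v) (c t) = wordDist S (c t) (c' v) :=
        wordDist_symm_s15 hsymm hgen _ _
      have t1 := wordDist_triangle_s15 hsymm hgen (c 0) (c' 0) (c t)
      have t2 := wordDist_triangle_s15 hsymm hgen (c' 0) (c' v) (c t)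
      have t3 := wordDist_triangle_s15 hsymm hgen (c' 0) (c 0) (c' v)
      have t4 := wordDist_triangle_s15 hsymm hgen (c 0) (c t) (c' v)
      have hdist : Nat.dist v t ≤ wordDist S (c 0) (c' 0) + 2 * δ := by
        rcases le_total v t with h | h
        · rw [Nat.dist_eq_sub_of_le h]; omega
        · rw [Nat.dist_comm, Nat.dist_eq_sub_of_le h]; omega
      have htri := wordDist_triangle_s15 hsymm hgen (c t) (c' v) (c' t)
      omega


lemma dsgRay_act (m : G → G) (f y : G) (t : ℕ) :
    dsgRay (fun z => m (f⁻¹ * z)) y t = f * dsgRay m (f⁻¹ * y) t := by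
  induction t with
  | zero => simp [dsgRay]
  | succ n ih => simp [dsgRay, ih, mul_assoc]

lemma isDSG_act {m : G → G} (hm : IsDSG (wordDist S) S m) (f : G) :
    IsDSG (wordDist S) S (fun z => m (f⁻¹ * z)) := by
  refine ⟨fun g => hm.1 _, fun g i j => ?_, fun g h => ?_⟩
  · rw [dsgRay_act m f g i, dsgRay_act m f g j, wordDist_mul_left]
    exact hm.2.1 (f⁻¹ * g) i j
  · obtain ⟨K, h1, h2⟩ := hm.2.2 (f⁻¹ * g) (f⁻¹ * h)
    refine ⟨K, fun t => ?_, fun s => ?_⟩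
    · obtain ⟨s, hs⟩ := h1 t
      exact ⟨s, by rw [dsgRay_act, dsgRay_act, wordDist_mul_left]; exact hs⟩
    · obtain ⟨t, ht⟩ := h2 s
      exact ⟨t, by rw [dsgRay_act, dsgRay_act, wordDist_mul_left]; exact ht⟩

lemma wd_aux (p q xx y : G) : wordDist S (p * xx) (q * y) = wordDist S xx (p⁻¹ * (q * y)) := by
  conv_lhs => rw [show q * y = p * (p⁻¹ * (q * y)) by group]
  rw [wordDist_mul_left]

end AuxLemmas

/-- for a pseudo-orbit `(x_g)` in `∂G` over the ball `F` of radius `L`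
(with respect to a cover `(V_j)` refining the `𝒩_x^L`-neighborhoods), the translated
DSG rays representing nearby pseudo-orbit points `6δ`-fellow travel up to time `L`. -/
theorem pseudo_orbit_rays_close {G : Type*} [Group G] (S : Set G)
    (hS : IsFinSymmGenSet S) (δ : ℕ) (hhyp : DiscHyperbolic (wordDist S) δ)
    (L : ℕ) (nV : ℕ) (V : Fin nV → Set (GromovBoundary (wordDist S)))
    (hopen : ∀ j, @IsOpen _ (boundaryTop (wordDist S)) (V j))
    (hcover : (⋃ j, V j) = Set.univ)
    -- any two points of a common `V j` satisfy `x' ∈ 𝒩_x^L`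
    (hV : ∀ (j : Fin nV) (x x' : GromovBoundary (wordDist S)), x ∈ V j → x' ∈ V j →
      ∀ m m' : DSGs (wordDist S) S,
        Qmap (wordDist S) S m = x → Qmap (wordDist S) S m' = x' →
        ∀ i ≤ L, wordDist S (dsgRay m.1 1 i) (dsgRay m'.1 1 i) ≤ 2 * δ)
    -- the pseudo-orbit and chosen DSG representatives
    (x : G → GromovBoundary (wordDist S)) (mm : G → DSGs (wordDist S) S)
    (hmm : ∀ g : G, Qmap (wordDist S) S (mm g) = x g)
    -- `(x_g)` is an `(F,(V_j))`-pseudo-orbit, `F` the ball of radius `L`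
    (hpo : ∀ g f : G, wordDist S f 1 ≤ L →
      ∃ j, boundaryAct S f (x g) ∈ V j ∧ x (f * g) ∈ V j) :
    ∀ g h : G, wordDist S h g ≤ L → ∀ t ≤ L,
      wordDist S (h * dsgRay (mm h⁻¹).1 1 t) (g * dsgRay (mm g⁻¹).1 1 t) ≤
        wordDist S h g + 6 * δ := by
  obtain ⟨-, hsymm, hgen⟩ := hS
  intro g h hL t ht
  -- the translated DSG representing `(h⁻¹g)·x_{g⁻¹}`
  set M : DSGs (wordDist S) S :=
    ⟨fun z => (mm g⁻¹).1 ((h⁻¹ * g)⁻¹ * z), isDSG_act (mm g⁻¹).2 (h⁻¹ * g)⟩ with hM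
  have hfL : wordDist S (h⁻¹ * g) 1 ≤ L := by
    have e : wordDist S (h⁻¹ * g) (h⁻¹ * h) = wordDist S g h := wordDist_mul_left S h⁻¹ g h
    rw [inv_mul_cancel] at e
    rw [e, wordDist_symm_s15 hsymm hgen]
    exact hL
  obtain ⟨j, hj1, hj2⟩ := hpo g⁻¹ (h⁻¹ * g) hfL
  rw [show h⁻¹ * g * g⁻¹ = h⁻¹ by group] at hj2
  have hQM : Qmap (wordDist S) S M = boundaryAct S (h⁻¹ * g) (x g⁻¹) := by
    rw [← hmm g⁻¹]
    apply Quot.sound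
    show Asymptotic (wordDist S) (dsgRay M.1 1) (fun s => (h⁻¹ * g) * dsgRay (mm g⁻¹).1 1 s)
    obtain ⟨K, h1, h2⟩ := (mm g⁻¹).2.2.2 ((h⁻¹ * g)⁻¹ * 1) 1
    refine ⟨K, fun u => ?_, fun s => ?_⟩
    · obtain ⟨s, hs⟩ := h1 u
      exact ⟨s, by rw [hM, dsgRay_act, wordDist_mul_left]; exact hs⟩
    · obtain ⟨u, hu⟩ := h2 s
      exact ⟨u, by rw [hM, dsgRay_act, wordDist_mul_left]; exact hu⟩
  have hstar := hV j _ _ hj1 hj2 M (mm h⁻¹) hQM (hmm h⁻¹) t ht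
  have hray : dsgRay M.1 1 t = (h⁻¹ * g) * dsgRay (mm g⁻¹).1 (g⁻¹ * h) t := by
    rw [hM, dsgRay_act]
    congr 2
    group
  rw [hray] at hstar
  have hfirst : wordDist S (dsgRay (mm h⁻¹).1 1 t)
      (h⁻¹ * (g * dsgRay (mm g⁻¹).1 (g⁻¹ * h) t)) ≤ 2 * δ := by
    rw [← mul_assoc, wordDist_symm_s15 hsymm hgen]
    exact hstar
  have hsecond : wordDist S (dsgRay (mm g⁻¹).1 (g⁻¹ * h) t) (dsgRay (mm g⁻¹).1 1 t) ≤
      wordDist S (dsgRay (mm g⁻¹).1 (g⁻¹ * h) 0) (dsgRay (mm g⁻¹).1 1 0) + 4 * δ :=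
    rays_fellow_travel hsymm hgen hhyp ((mm g⁻¹).2.2.1 (g⁻¹ * h)) ((mm g⁻¹).2.2.1 1)
      ((mm g⁻¹).2.2.2 (g⁻¹ * h) 1) t
  have hbase : wordDist S (dsgRay (mm g⁻¹).1 (g⁻¹ * h) 0) (dsgRay (mm g⁻¹).1 1 0) =
      wordDist S h g := by
    show wordDist S (g⁻¹ * h) 1 = wordDist S h g
    have e : wordDist S (g * (g⁻¹ * h)) (g * 1) = wordDist S (g⁻¹ * h) 1 :=
      wordDist_mul_left S g (g⁻¹ * h) 1
    rw [mul_inv_cancel_left, mul_one] at e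
    exact e.symm
  rw [hbase] at hsecond
  calc wordDist S (h * dsgRay (mm h⁻¹).1 1 t) (g * dsgRay (mm g⁻¹).1 1 t)
      ≤ wordDist S (h * dsgRay (mm h⁻¹).1 1 t) (g * dsgRay (mm g⁻¹).1 (g⁻¹ * h) t) +
        wordDist S (g * dsgRay (mm g⁻¹).1 (g⁻¹ * h) t) (g * dsgRay (mm g⁻¹).1 1 t) :=
        wordDist_triangle_s15 hsymm hgen _ _ _
    _ = wordDist S (dsgRay (mm h⁻¹).1 1 t)
          (h⁻¹ * (g * dsgRay (mm g⁻¹).1 (g⁻¹ * h) t)) +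
        wordDist S (dsgRay (mm g⁻¹).1 (g⁻¹ * h) t) (dsgRay (mm g⁻¹).1 1 t) := by
        rw [wd_aux, wordDist_mul_left]
    _ ≤ 2 * δ + (wordDist S h g + 4 * δ) := add_le_add hfirst hsecond
    _ = wordDist S h g + 6 * δ := by omega
end
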